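/- arXiv:math/0111131 — 2 statements merged into one kernel-verified Lean document; each statement's English description precedes it below -/
import Mathlib

section
/- Let ω ∈ u(2) be a 2-form satisfying x_{14}+x_{23}=0, x_{13}-x_{24}=0, x_{i5}=0, acting on Δ_5 = C^4 via the Clifford representation ω ↦ Σ_{i<j} x_{ij} e_i·e_j. Then the following are equivalent: (1) there exists a nonzero spinor ψ ∈ Δ_5^2 = ker(F) with ω·ψ = 0; (2) ω·ψ = 0 for every ψ ∈ Δ_5^2; (3) ω is a scalar multiple of F = e_1∧e_2 + e_3∧e_4. -/
open Matrix Complex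

/-- The explicit matrices of Clifford multiplication by `e₁,…,e₅` on the 5-dimensional
spin representation `Δ₅ ≅ ℂ⁴` (indexed `0,…,4`). -/
noncomputable def cl : Fin 5 → Matrix (Fin 4) (Fin 4) ℂ
  | 0 => !![0, 0, 0, I; 0, 0, I, 0; 0, I, 0, 0; I, 0, 0, 0]
  | 1 => !![0, 0, 0, -1; 0, 0, 1, 0; 0, -1, 0, 0; 1, 0, 0, 0]
  | 2 => !![0, 0, -I, 0; 0, 0, 0, I; -I, 0, 0, 0; 0, I, 0, 0]
  | 3 => !![0, 0, 1, 0; 0, 0, 0, 1; -1, 0, 0, 0; 0, -1, 0, 0]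
  | 4 => !![I, 0, 0, 0; 0, I, 0, 0; 0, 0, -I, 0; 0, 0, 0, -I]

/-- The fundamental form `F = e₁·e₂ + e₃·e₄` acting on spinors. -/
noncomputable def Fspin : Matrix (Fin 4) (Fin 4) ℂ := cl 0 * cl 1 + cl 2 * cl 3

lemma cl01 : cl 0 * cl 1 = !![I, 0, 0, 0; 0, -I, 0, 0; 0, 0, I, 0; 0, 0, 0, -I] := by
  ext i j; fin_cases i <;> fin_cases j <;>
    simp [cl, Matrix.mul_apply, Fin.sum_univ_four, Matrix.vecHead, Matrix.vecTail] <;> ring_nf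

lemma cl02 : cl 0 * cl 2 = !![0, -1, 0, 0; 1, 0, 0, 0; 0, 0, 0, -1; 0, 0, 1, 0] := by
  ext i j; fin_cases i <;> fin_cases j <;>
    simp [cl, Matrix.mul_apply, Fin.sum_univ_four, Matrix.vecHead, Matrix.vecTail] <;> ring_nf

lemma cl03 : cl 0 * cl 3 = !![0, -I, 0, 0; -I, 0, 0, 0; 0, 0, 0, I; 0, 0, I, 0] := by
  ext i j; fin_cases i <;> fin_cases j <;>
    simp [cl, Matrix.mul_apply, Fin.sum_univ_four, Matrix.vecHead, Matrix.vecTail] <;> ring_nf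

lemma cl04 : cl 0 * cl 4 = !![0, 0, 0, 1; 0, 0, 1, 0; 0, -1, 0, 0; -1, 0, 0, 0] := by
  ext i j; fin_cases i <;> fin_cases j <;>
    simp [cl, Matrix.mul_apply, Fin.sum_univ_four, Matrix.vecHead, Matrix.vecTail] <;> ring_nf

lemma cl12 : cl 1 * cl 2 = !![0, -I, 0, 0; -I, 0, 0, 0; 0, 0, 0, -I; 0, 0, -I, 0] := by
  ext i j; fin_cases i <;> fin_cases j <;>
    simp [cl, Matrix.mul_apply, Fin.sum_univ_four, Matrix.vecHead, Matrix.vecTail] <;> ring_nf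

lemma cl13 : cl 1 * cl 3 = !![0, 1, 0, 0; -1, 0, 0, 0; 0, 0, 0, -1; 0, 0, 1, 0] := by
  ext i j; fin_cases i <;> fin_cases j <;>
    simp [cl, Matrix.mul_apply, Fin.sum_univ_four, Matrix.vecHead, Matrix.vecTail] <;> ring_nf

lemma cl14 : cl 1 * cl 4 = !![0, 0, 0, I; 0, 0, -I, 0; 0, -I, 0, 0; I, 0, 0, 0] := by
  ext i j; fin_cases i <;> fin_cases j <;>
    simp [cl, Matrix.mul_apply, Fin.sum_univ_four, Matrix.vecHead, Matrix.vecTail] <;> ring_nf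

lemma cl23 : cl 2 * cl 3 = !![I, 0, 0, 0; 0, -I, 0, 0; 0, 0, -I, 0; 0, 0, 0, I] := by
  ext i j; fin_cases i <;> fin_cases j <;>
    simp [cl, Matrix.mul_apply, Fin.sum_univ_four, Matrix.vecHead, Matrix.vecTail] <;> ring_nf

lemma cl24 : cl 2 * cl 4 = !![0, 0, -1, 0; 0, 0, 0, 1; 1, 0, 0, 0; 0, -1, 0, 0] := by
  ext i j; fin_cases i <;> fin_cases j <;>
    simp [cl, Matrix.mul_apply, Fin.sum_univ_four, Matrix.vecHead, Matrix.vecTail] <;> ring_nf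

lemma cl34 : cl 3 * cl 4 = !![0, 0, -I, 0; 0, 0, 0, -I; -I, 0, 0, 0; 0, -I, 0, 0] := by
  ext i j; fin_cases i <;> fin_cases j <;>
    simp [cl, Matrix.mul_apply, Fin.sum_univ_four, Matrix.vecHead, Matrix.vecTail] <;> ring_nf

set_option maxRecDepth 8000 in
set_option maxHeartbeats 1000000 in
lemma Omega_eq (x : Fin 5 → Fin 5 → ℝ)
    (hu1 : x 0 3 + x 1 2 = 0) (hu2 : x 0 2 - x 1 3 = 0) (hu3 : ∀ i, x i 4 = 0) :
    (∑ i : Fin 5, ∑ j : Fin 5, if i < j then (x i j : ℂ) • (cl i * cl j) else 0) =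
    !![((x 0 1 : ℝ) + x 2 3)*I, 0, 0, 0;
       0, -((x 0 1 : ℝ) + x 2 3)*I, 0, 0;
       0, 0, ((x 0 1 : ℝ) - x 2 3)*I, -2*(x 1 3 : ℝ) - 2*(x 1 2 : ℝ)*I;
       0, 0, 2*(x 1 3 : ℝ) - 2*(x 1 2 : ℝ)*I, -((x 0 1 : ℝ) - x 2 3)*I] := by
  have h03 : x 0 3 = - x 1 2 := by linarith
  have h02 : x 0 2 = x 1 3 := by linarith
  rw [show (∑ i : Fin 5, ∑ j : Fin 5, if i < j then (x i j : ℂ) • (cl i * cl j) else 0) =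
      (x 0 1 : ℂ) • (cl 0 * cl 1) + (x 0 2 : ℂ) • (cl 0 * cl 2) + (x 0 3 : ℂ) • (cl 0 * cl 3)
      + (x 0 4 : ℂ) • (cl 0 * cl 4) + (x 1 2 : ℂ) • (cl 1 * cl 2) + (x 1 3 : ℂ) • (cl 1 * cl 3)
      + (x 1 4 : ℂ) • (cl 1 * cl 4) + (x 2 3 : ℂ) • (cl 2 * cl 3) + (x 2 4 : ℂ) • (cl 2 * cl 4)
      + (x 3 4 : ℂ) • (cl 3 * cl 4) from by
    rw [Fin.sum_univ_five]
    rw [Fin.sum_univ_five, Fin.sum_univ_five, Fin.sum_univ_five, Fin.sum_univ_five,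
      Fin.sum_univ_five]
    norm_num
    simp +decide
    abel]
  rw [cl01, cl02, cl03, cl04, cl12, cl13, cl14, cl23, cl24, cl34]
  ext i j
  fin_cases i <;> fin_cases j <;>
    simp [h02, h03, hu3 0, hu3 1, hu3 2, hu3 3, Matrix.vecHead, Matrix.vecTail] <;>
    push_cast <;> ring

lemma Fspin_eq : Fspin = !![2*I,0,0,0;0,-2*I,0,0;0,0,0,0;0,0,0,0] := by
  ext i j
  fin_cases i <;> fin_cases j <;>
    simp [Fspin, cl, Matrix.mul_apply, Fin.sum_univ_four, Matrix.vecHead, Matrix.vecTail] <;>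
    ring_nf

lemma ker_iff (ψ : Fin 4 → ℂ) : Fspin *ᵥ ψ = 0 ↔ ψ 0 = 0 ∧ ψ 1 = 0 := by
  constructor
  · intro h
    have h0 := congrFun h 0
    have h1 := congrFun h 1
    rw [Fspin_eq] at h0 h1
    simp [Matrix.mulVec, dotProduct, Fin.sum_univ_four, I_ne_zero,
      Matrix.vecHead, Matrix.vecTail, Function.comp] at h0 h1
    exact ⟨h0, h1⟩
  · intro ⟨h0, h1⟩
    rw [Fspin_eq]
    funext i
    fin_cases i <;>
      simp [Matrix.mulVec, dotProduct, Fin.sum_univ_four, h0, h1,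
        Matrix.vecHead, Matrix.vecTail, Function.comp]

/-- For a 2-form `ω = Σ_{i<j} x_{ij} e_i∧e_j` in `u(2)` (i.e. satisfying
`x₁₄ + x₂₃ = 0`, `x₁₃ - x₂₄ = 0`, `x_{i5} = 0`; indices shifted down by one),
acting on `Δ₅ = ℂ⁴` by `Σ_{i<j} x_{ij} e_i·e_j`, the following are equivalent:
(1) some nonzero spinor `ψ ∈ Δ₅² = ker F` satisfies `ω·ψ = 0`;
(2) `ω·ψ = 0` for every `ψ ∈ Δ₅²`;
(3) `ω` is a scalar multiple of `F = e₁∧e₂ + e₃∧e₄`. -/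
theorem stmt3 (x : Fin 5 → Fin 5 → ℝ)
    (hu1 : x 0 3 + x 1 2 = 0) (hu2 : x 0 2 - x 1 3 = 0) (hu3 : ∀ i, x i 4 = 0) :
    let Ω : Matrix (Fin 4) (Fin 4) ℂ :=
      ∑ i : Fin 5, ∑ j : Fin 5, if i < j then (x i j : ℂ) • (cl i * cl j) else 0
    ((∃ ψ : Fin 4 → ℂ, ψ ≠ 0 ∧ Fspin *ᵥ ψ = 0 ∧ Ω *ᵥ ψ = 0) ↔
        (∀ ψ : Fin 4 → ℂ, Fspin *ᵥ ψ = 0 → Ω *ᵥ ψ = 0)) ∧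
      ((∀ ψ : Fin 4 → ℂ, Fspin *ᵥ ψ = 0 → Ω *ᵥ ψ = 0) ↔
        (∃ a : ℝ, x 0 1 = a ∧ x 2 3 = a ∧
          x 0 2 = 0 ∧ x 0 3 = 0 ∧ x 1 2 = 0 ∧ x 1 3 = 0)) := by
  intro Ω
  have hΩ : Ω = !![((x 0 1 : ℝ) + x 2 3)*I, 0, 0, 0;
       0, -((x 0 1 : ℝ) + x 2 3)*I, 0, 0;
       0, 0, ((x 0 1 : ℝ) - x 2 3)*I, -2*(x 1 3 : ℝ) - 2*(x 1 2 : ℝ)*I;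
       0, 0, 2*(x 1 3 : ℝ) - 2*(x 1 2 : ℝ)*I, -((x 0 1 : ℝ) - x 2 3)*I] :=
    Omega_eq x hu1 hu2 hu3
  have h03 : x 0 3 = - x 1 2 := by linarith
  have h02 : x 0 2 = x 1 3 := by linarith
  -- P3 → P2
  have hB : (∃ a : ℝ, x 0 1 = a ∧ x 2 3 = a ∧
      x 0 2 = 0 ∧ x 0 3 = 0 ∧ x 1 2 = 0 ∧ x 1 3 = 0) →
      ∀ ψ : Fin 4 → ℂ, Fspin *ᵥ ψ = 0 → Ω *ᵥ ψ = 0 := by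
    rintro ⟨a, e1, e2, e3, e4, e5, e6⟩ ψ hψ
    obtain ⟨h0, h1⟩ := (ker_iff ψ).1 hψ
    rw [hΩ]
    funext i
    fin_cases i <;>
      simp [Matrix.mulVec, dotProduct, Fin.sum_univ_four, h0, h1, e1, e2, e5, e6,
        Matrix.vecHead, Matrix.vecTail, Function.comp]
  -- P1 → P3
  have hD : (∃ ψ : Fin 4 → ℂ, ψ ≠ 0 ∧ Fspin *ᵥ ψ = 0 ∧ Ω *ᵥ ψ = 0) →
      (∃ a : ℝ, x 0 1 = a ∧ x 2 3 = a ∧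
        x 0 2 = 0 ∧ x 0 3 = 0 ∧ x 1 2 = 0 ∧ x 1 3 = 0) := by
    rintro ⟨ψ, hne, hk, hz⟩
    obtain ⟨h0, h1⟩ := (ker_iff ψ).1 hk
    rw [hΩ] at hz
    have e2 : ((x 0 1 : ℂ) - x 2 3) * I * ψ 2 + (-2*(x 1 3 : ℂ) - 2*(x 1 2 : ℂ)*I) * ψ 3 = 0 := by
      have := congrFun hz 2
      simp [Matrix.mulVec, dotProduct, Fin.sum_univ_four, h0, h1,
        Matrix.vecHead, Matrix.vecTail, Function.comp] at this
      linear_combination this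
    have e3 : (2*(x 1 3 : ℂ) - 2*(x 1 2 : ℂ)*I) * ψ 2 + (-((x 0 1 : ℂ) - x 2 3)*I) * ψ 3 = 0 := by
      have := congrFun hz 3
      simp [Matrix.mulVec, dotProduct, Fin.sum_univ_four, h0, h1,
        Matrix.vecHead, Matrix.vecTail, Function.comp] at this
      linear_combination this
    have hdet2 : (((x 0 1 : ℂ) - x 2 3)^2 + 4*(x 1 2 : ℂ)^2 + 4*(x 1 3 : ℂ)^2) * ψ 2 = 0 := by
      linear_combination (-((x 0 1 : ℂ) - x 2 3)*I) * e2 + (2*(x 1 3 : ℂ) + 2*(x 1 2 : ℂ)*I) * e3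
        + ((((x 0 1 : ℂ) - x 2 3)^2 + 4*(x 1 2 : ℂ)^2) * ψ 2) * Complex.I_sq
    have hdet3 : (((x 0 1 : ℂ) - x 2 3)^2 + 4*(x 1 2 : ℂ)^2 + 4*(x 1 3 : ℂ)^2) * ψ 3 = 0 := by
      linear_combination (((x 0 1 : ℂ) - x 2 3)*I) * e3 + (-2*(x 1 3 : ℂ) + 2*(x 1 2 : ℂ)*I) * e2
        + ((((x 0 1 : ℂ) - x 2 3)^2 + 4*(x 1 2 : ℂ)^2) * ψ 3) * Complex.I_sq
    have hne' : ψ 2 ≠ 0 ∨ ψ 3 ≠ 0 := by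
      by_contra hcon
      push_neg at hcon
      apply hne
      funext i
      fin_cases i <;> simp [h0, h1, hcon.1, hcon.2]
    have hdet : (((x 0 1 : ℂ) - x 2 3)^2 + 4*(x 1 2 : ℂ)^2 + 4*(x 1 3 : ℂ)^2) = 0 := by
      rcases hne' with h | h
      · exact (mul_eq_zero.1 hdet2).resolve_right h
      · exact (mul_eq_zero.1 hdet3).resolve_right h
    have hdetR : (x 0 1 - x 2 3)^2 + 4*(x 1 2)^2 + 4*(x 1 3)^2 = 0 := by
      exact_mod_cast hdet
    have hpq : x 0 1 = x 2 3 := by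
      nlinarith [sq_nonneg (x 0 1 - x 2 3), sq_nonneg (x 1 2), sq_nonneg (x 1 3)]
    have hb : x 1 2 = 0 := by
      nlinarith [sq_nonneg (x 0 1 - x 2 3), sq_nonneg (x 1 2), sq_nonneg (x 1 3)]
    have hc : x 1 3 = 0 := by
      nlinarith [sq_nonneg (x 0 1 - x 2 3), sq_nonneg (x 1 2), sq_nonneg (x 1 3)]
    exact ⟨x 0 1, rfl, hpq.symm, by rw [h02]; exact hc, by rw [h03, hb, neg_zero], hb, hc⟩
  refine ⟨⟨fun h => hB (hD h), fun h => ?_⟩, hD ∘ fun h => ?_, hB⟩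
  · refine ⟨![0,0,1,0], ?_, ?_, ?_⟩
    · intro hcon
      have := congrFun hcon 2
      simp at this
    · rw [ker_iff]; simp
    · exact h _ (by rw [ker_iff]; simp)
  · refine ⟨![0,0,1,0], ?_, ?_, ?_⟩
    · intro hcon
      have := congrFun hcon 2
      simp at this
    · rw [ker_iff]; simp
    · exact h _ (by rw [ker_iff]; simp)
end

section
/- Let a,b,c,d be real constants. With the frame change e_1* = (e_1+e_4)/√2, e_2* = (e_2-e_3)/√2, e_3* = (e_1-e_4)/√2, e_4* = (e_2+e_3)/√2, C_1* = A + e_5, C_2* = A - e_5, the structure equations of M^5(a,b,c,d) with a=c=d=0, b=1 are equivalent to: de_1* = C_1*∧e_2*, de_2* = -C_1*∧e_1*, de_3* = C_2*∧e_4*, de_4* = -C_2*∧e_3*, dC_1* = -2·e_1*∧e_2*, dC_2* = -2·e_3*∧e_4* (the structure equations of the Lie algebra su(2)⊕su(2)). -/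
/-!
Since `D` is linear, each starred equation is the sum or the difference of two of the original
ones, paired as `(e₁, e₄)`, `(e₂, e₃)` and `(A, e₅)`; the normalising factors cancel because
`2 · (1/√2)² = 1`, and each pair is recovered from its sum and difference because `2` is
invertible. What remains are identities in `Λ²V`, checked by expanding and anticommuting.
-/

open ExteriorAlgebra

local notation "ι" => ExteriorAlgebra.ι ℝ

theorem ExteriorAlgebra.ι_mul_ι_comm {R M : Type*} [CommRing R] [AddCommGroup M] [Module R M]
    (x y : M) :
    ExteriorAlgebra.ι R x * ExteriorAlgebra.ι R y = -(ExteriorAlgebra.ι R y * ExteriorAlgebra.ι R x) :=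
  eq_neg_of_add_eq_zero_left (ι_add_mul_swap x y)

theorem eq_and_eq_of_add_eq_of_sub_eq {K M : Type*} [Field K] [CharZero K] [AddCommGroup M]
    [Module K M] {a b y z : M} (hy : a + b = y) (hz : a - b = z) :
    a = (2⁻¹ : K) • (y + z) ∧ b = (2⁻¹ : K) • (y - z) := by
  subst hy hz
  constructor <;> module

/-- Indices are shifted down by one: `e 0, …, e 4` are the paper's `e₁, …, e₅`. -/
theorem stmt15_general {V : Type*} [AddCommGroup V] [Module ℝ V]
    (e : Fin 5 → V) (A : V)
    (D : ExteriorAlgebra ℝ V →ₗ[ℝ] ExteriorAlgebra ℝ V) :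
    ((D (ι (e 0)) = ι A * ι (e 1) + ι (e 2) * ι (e 4) ∧
      D (ι (e 1)) = -(ι A * ι (e 0)) + ι (e 3) * ι (e 4) ∧
      D (ι (e 2)) = ι A * ι (e 3) - ι (e 0) * ι (e 4) ∧
      D (ι (e 3)) = -(ι A * ι (e 2)) - ι (e 1) * ι (e 4) ∧
      D (ι (e 4)) = ι (e 0) * ι (e 2) + ι (e 1) * ι (e 3) ∧
      D (ι A) = -(ι (e 0) * ι (e 1) + ι (e 2) * ι (e 3))) ↔
    ((D (ι ((Real.sqrt 2)⁻¹ • (e 0 + e 3))) =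
        ι (A + e 4) * ι ((Real.sqrt 2)⁻¹ • (e 1 - e 2)) ∧
      D (ι ((Real.sqrt 2)⁻¹ • (e 1 - e 2))) =
        -(ι (A + e 4) * ι ((Real.sqrt 2)⁻¹ • (e 0 + e 3))) ∧
      D (ι ((Real.sqrt 2)⁻¹ • (e 0 - e 3))) =
        ι (A - e 4) * ι ((Real.sqrt 2)⁻¹ • (e 1 + e 2)) ∧
      D (ι ((Real.sqrt 2)⁻¹ • (e 1 + e 2))) =
        -(ι (A - e 4) * ι ((Real.sqrt 2)⁻¹ • (e 0 - e 3))) ∧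
      D (ι (A + e 4)) =
        (-2 : ℝ) • (ι ((Real.sqrt 2)⁻¹ • (e 0 + e 3)) * ι ((Real.sqrt 2)⁻¹ • (e 1 - e 2))) ∧
      D (ι (A - e 4)) =
        (-2 : ℝ) • (ι ((Real.sqrt 2)⁻¹ • (e 0 - e 3)) * ι ((Real.sqrt 2)⁻¹ • (e 1 + e 2)))))) := by
  have hs : (√2)⁻¹ * (√2)⁻¹ = (2⁻¹ : ℝ) := by rw [← mul_inv, Real.mul_self_sqrt zero_le_two]
  have hs₀ : (√2)⁻¹ ≠ 0 := by positivity
  have h₂ : (-2 : ℝ) * 2⁻¹ = -1 := by norm_num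
  simp only [map_add, map_sub, map_smul, smul_mul_assoc, mul_smul_comm, smul_smul, hs, h₂,
    neg_one_smul, ← smul_neg, smul_right_inj hs₀]
  generalize D (ι (e 0)) = d₀, D (ι (e 1)) = d₁, D (ι (e 2)) = d₂, D (ι (e 3)) = d₃,
    D (ι (e 4)) = d₄, D (ι A) = d
  constructor
  · rintro ⟨rfl, rfl, rfl, rfl, rfl, rfl⟩
    refine ⟨?_, ?_, ?_, ?_, ?_, ?_⟩ <;>
    · simp only [mul_add, add_mul, mul_sub, sub_mul, ι_mul_ι_comm (e 4),
        ι_mul_ι_comm (e 3) (e 1), ι_mul_ι_comm (e 3) (e 2)]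
      abel
  · rintro ⟨add₀₃, sub₁₂, sub₀₃, add₁₂, add₄, sub₄⟩
    obtain ⟨rfl, rfl⟩ := eq_and_eq_of_add_eq_of_sub_eq (K := ℝ) add₀₃ sub₀₃
    obtain ⟨rfl, rfl⟩ := eq_and_eq_of_add_eq_of_sub_eq (K := ℝ) add₁₂ sub₁₂
    obtain ⟨rfl, rfl⟩ := eq_and_eq_of_add_eq_of_sub_eq (K := ℝ) add₄ sub₄
    refine ⟨?_, ?_, ?_, ?_, ?_, ?_⟩ <;>
    · simp only [mul_add, add_mul, mul_sub, sub_mul, ι_mul_ι_comm (e 4),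
        ι_mul_ι_comm (e 3) (e 1), ι_mul_ι_comm (e 3) (e 2)]
      module

/-- With the frame change `e₁* = (e₁+e₄)/√2`, `e₂* = (e₂-e₃)/√2`, `e₃* = (e₁-e₄)/√2`,
`e₄* = (e₂+e₃)/√2`, `C₁* = A + e₅`, `C₂* = A - e₅`, the structure equations of
`M⁵(a,b,c,d)` with `a = c = d = 0`, `b = 1` are equivalent to the structure equations
of the Lie algebra `su(2) ⊕ su(2)`.  (Indices are shifted down by one: `e 0,…,e 4`
are the paper's `e₁,…,e₅`.) -/
theorem stmt15 {V : Type*} [AddCommGroup V] [Module ℝ V]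
    (e : Fin 5 → V) (A : V)
    (hind : LinearIndependent ℝ (Fin.cons A e : Fin 6 → V))
    (D : ExteriorAlgebra ℝ V →ₗ[ℝ] ExteriorAlgebra ℝ V) :
    ((D (ι (e 0)) = ι A * ι (e 1) + ι (e 2) * ι (e 4) ∧
      D (ι (e 1)) = -(ι A * ι (e 0)) + ι (e 3) * ι (e 4) ∧
      D (ι (e 2)) = ι A * ι (e 3) - ι (e 0) * ι (e 4) ∧
      D (ι (e 3)) = -(ι A * ι (e 2)) - ι (e 1) * ι (e 4) ∧
      D (ι (e 4)) = ι (e 0) * ι (e 2) + ι (e 1) * ι (e 3) ∧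
      D (ι A) = -(ι (e 0) * ι (e 1) + ι (e 2) * ι (e 3))) ↔
    ((D (ι ((Real.sqrt 2)⁻¹ • (e 0 + e 3))) =
        ι (A + e 4) * ι ((Real.sqrt 2)⁻¹ • (e 1 - e 2)) ∧
      D (ι ((Real.sqrt 2)⁻¹ • (e 1 - e 2))) =
        -(ι (A + e 4) * ι ((Real.sqrt 2)⁻¹ • (e 0 + e 3))) ∧
      D (ι ((Real.sqrt 2)⁻¹ • (e 0 - e 3))) =
        ι (A - e 4) * ι ((Real.sqrt 2)⁻¹ • (e 1 + e 2)) ∧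
      D (ι ((Real.sqrt 2)⁻¹ • (e 1 + e 2))) =
        -(ι (A - e 4) * ι ((Real.sqrt 2)⁻¹ • (e 0 - e 3))) ∧
      D (ι (A + e 4)) =
        (-2 : ℝ) • (ι ((Real.sqrt 2)⁻¹ • (e 0 + e 3)) * ι ((Real.sqrt 2)⁻¹ • (e 1 - e 2))) ∧
      D (ι (A - e 4)) =
        (-2 : ℝ) • (ι ((Real.sqrt 2)⁻¹ • (e 0 - e 3)) * ι ((Real.sqrt 2)⁻¹ • (e 1 + e 2)))))) :=
  stmt15_general e A D
end
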